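/- arXiv:2106.05714 — 5 statements merged into one kernel-verified Lean document; each statement's English description precedes it below -/
import Mathlib

section
/- For every c > 0 and every x ∈ ℝ, | |x| − x·tanh(x/c) | ≤ 0.28·c. -/
lemma rth_key (u : ℝ) (hu : 0 ≤ u) : u ≤ 7/25 * (Real.exp u + 1) := by
  have h := Real.sum_le_exp_of_nonneg hu 6
  simp [Finset.sum_range_succ, Nat.factorial] at h
  nlinarith [sq_nonneg (u - 13/10), sq_nonneg u, sq_nonneg (u^2 - 169/100),
    sq_nonneg ((u-13/10)*u), sq_nonneg ((u-13/10)*u^2), pow_nonneg hu 3, pow_nonneg hu 5]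

/-- For every `c > 0` and every `x : ℝ`, `| |x| − x·tanh(x/c) | ≤ 0.28·c`. -/
theorem rth_abs_approx_bound (c : ℝ) (hc : 0 < c) (x : ℝ) :
    |(|x| - x * Real.tanh (x / c))| ≤ 0.28 * c := by
  have heq : |x| - x * Real.tanh (x / c) = |x| - |x| * Real.tanh (|x| / c) := by
    rcases abs_cases x with ⟨h1, _⟩ | ⟨h1, _⟩
    · rw [h1]
    · rw [h1, neg_div, Real.tanh_neg]; ring
  rw [heq]
  set t : ℝ := |x| / c with ht
  have htn : 0 ≤ t := div_nonneg (abs_nonneg x) hc.le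
  have hxt : |x| = c * t := by rw [ht]; field_simp
  rw [hxt]
  have hE := Real.exp_pos t
  have hE' := Real.exp_pos (-t)
  have hne : Real.exp t + Real.exp (-t) ≠ 0 := by positivity
  have htanh : Real.tanh t = (Real.exp t - Real.exp (-t)) / (Real.exp t + Real.exp (-t)) := by
    rw [Real.tanh_eq_sinh_div_cosh, Real.sinh_eq, Real.cosh_eq]
    field_simp
  have hEE : Real.exp t * Real.exp (-t) = 1 := by
    rw [← Real.exp_add]; simp
  have hkey := rth_key (2 * t) (by linarith)
  have h2t : Real.exp (2 * t) = Real.exp t * Real.exp t := by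
    rw [two_mul, Real.exp_add]
  rw [h2t] at hkey
  have habs : c * t - c * t * Real.tanh t = 2 * c * t * Real.exp (-t) / (Real.exp t + Real.exp (-t)) := by
    rw [htanh]
    field_simp
    ring
  rw [habs, abs_of_nonneg (by positivity)]
  rw [div_le_iff₀ (by positivity)]
  have hm := mul_le_mul_of_nonneg_left hkey (mul_nonneg hc.le hE'.le)
  have hE3 : Real.exp t * Real.exp t * Real.exp (-t) = Real.exp t := by
    rw [mul_assoc, hEE, mul_one]
  norm_num
  nlinarith [hm, hE3]
end

section
/- The function s(t) = t·(tanh(t) + 1) − 1 is strictly increasing on [0, ∞) with s(0) = −1, and there exists a unique t* > 0 with t*·(tanh(t*) + 1) = 1; moreover, for every c > 0 the supremum over x ∈ ℝ of |x| − x·tanh(x/c) equals c·t*·(1 − tanh(t*)), attained at x = ± c·t*. -/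
/-- tanh in terms of exp(2x). -/
lemma tanh_exp_formula (x : ℝ) :
    Real.tanh x = (Real.exp (2 * x) - 1) / (Real.exp (2 * x) + 1) := by
  rw [Real.tanh_eq_sinh_div_cosh, Real.sinh_eq, Real.cosh_eq]
  have h : Real.exp (2 * x) = Real.exp x * Real.exp x := by
    rw [two_mul, Real.exp_add]
  have hx : Real.exp x ≠ 0 := (Real.exp_pos x).ne'
  have hpos : 0 < Real.exp x + Real.exp (-x) :=
    add_pos (Real.exp_pos _) (Real.exp_pos _)
  rw [Real.exp_neg] at *
  field_simp
  nlinarith [Real.exp_pos x]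

/-- tangent line bound for exp. -/
lemma key_ineq (s v : ℝ) (hs : s * Real.exp s = Real.exp s + 1) :
    v * Real.exp s ≤ Real.exp v + 1 := by
  have h1 : Real.exp s * (1 + (v - s)) ≤ Real.exp v := by
    have := Real.add_one_le_exp (v - s)
    calc Real.exp s * (1 + (v - s)) ≤ Real.exp s * Real.exp (v - s) :=
          mul_le_mul_of_nonneg_left (by linarith) (Real.exp_pos s).le
      _ = Real.exp v := by rw [← Real.exp_add]; ring_nf
  nlinarith [Real.exp_pos s, Real.exp_pos v]

lemma smono : StrictMonoOn (fun t : ℝ => t * (Real.tanh t + 1) - 1) (Set.Ici 0) := by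
  intro a ha b hb hab
  simp only [Set.mem_Ici] at ha hb
  have eA : 0 < Real.exp (2 * a) := Real.exp_pos _
  have eB : 0 < Real.exp (2 * b) := Real.exp_pos _
  have hAB : Real.exp (2 * a) < Real.exp (2 * b) := Real.exp_lt_exp.2 (by linarith)
  have hA1 : 1 ≤ Real.exp (2 * a) := by
    rw [← Real.exp_zero]; exact Real.exp_le_exp.2 (by linarith)
  have h1 : Real.tanh a + 1 = 2 * Real.exp (2 * a) / (Real.exp (2 * a) + 1) := by
    rw [tanh_exp_formula]; field_simp; ring
  have h2 : Real.tanh b + 1 = 2 * Real.exp (2 * b) / (Real.exp (2 * b) + 1) := by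
    rw [tanh_exp_formula]; field_simp; ring
  simp only
  rw [sub_lt_sub_iff_right, h1, h2, ← mul_div_assoc, ← mul_div_assoc,
    div_lt_div_iff₀ (by linarith) (by linarith)]
  nlinarith [mul_pos eA eB]

/-- The function `s(t) = t·(tanh t + 1) − 1` is strictly increasing on `[0, ∞)` with
`s(0) = −1`, there is a unique `t* > 0` with `t*·(tanh t* + 1) = 1`, and for every
`c > 0` the supremum over `x ∈ ℝ` of `|x| − x·tanh(x/c)` equals `c·t*·(1 − tanh t*)`,
attained at `x = ± c·t*`. -/
theorem rth_abs_error_sup :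
    StrictMonoOn (fun t : ℝ => t * (Real.tanh t + 1) - 1) (Set.Ici 0) ∧
    (0 : ℝ) * (Real.tanh 0 + 1) - 1 = -1 ∧
    (∃! t : ℝ, 0 < t ∧ t * (Real.tanh t + 1) = 1) ∧
    (∀ t : ℝ, 0 < t → t * (Real.tanh t + 1) = 1 →
      ∀ c : ℝ, 0 < c →
        IsGreatest (Set.range fun x : ℝ => |x| - x * Real.tanh (x / c))
          (c * t * (1 - Real.tanh t)) ∧
        |c * t| - (c * t) * Real.tanh ((c * t) / c) = c * t * (1 - Real.tanh t) ∧
        |(-(c * t))| - (-(c * t)) * Real.tanh ((-(c * t)) / c) =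
          c * t * (1 - Real.tanh t)) := by
  have cont : Continuous fun t : ℝ => t * (Real.tanh t + 1) - 1 := by
    have : Continuous Real.tanh := by
      have : Real.tanh = fun x => Real.sinh x / Real.cosh x :=
        funext fun x => Real.tanh_eq_sinh_div_cosh (x := x)
      rw [this]
      exact Real.continuous_sinh.div Real.continuous_cosh fun x => (Real.cosh_pos x).ne'
    fun_prop
  refine ⟨smono, by norm_num, ?_, ?_⟩
  · -- existence and uniqueness
    have h01 : (0:ℝ) ≤ 1 := zero_le_one
    have hmem : (0:ℝ) ∈ Set.Icc ((fun t : ℝ => t * (Real.tanh t + 1) - 1) 0)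
        ((fun t : ℝ => t * (Real.tanh t + 1) - 1) 1) := by
      constructor
      · norm_num
      · simp only [one_mul]
        have : 0 < Real.tanh 1 := by
          rw [tanh_exp_formula]
          have h3 : 1 < Real.exp (2 * 1) := by
            rw [← Real.exp_zero]; exact Real.exp_lt_exp.2 (by norm_num)
          exact div_pos (by linarith) (by linarith)
        linarith
    obtain ⟨t, ht, hval⟩ := intermediate_value_Icc h01 (cont.continuousOn) hmem
    have hval' : t * (Real.tanh t + 1) - 1 = 0 := hval
    have ht0 : 0 < t := by
      rcases lt_or_eq_of_le ht.1 with h | h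
      · exact h
      · exfalso; rw [← h] at hval'; norm_num [Real.tanh_zero] at hval'
    refine ⟨t, ⟨ht0, by linarith⟩, ?_⟩
    rintro u ⟨hu0, hu⟩
    apply smono.injOn (Set.mem_Ici.2 hu0.le) (Set.mem_Ici.2 ht0.le)
    show u * (Real.tanh u + 1) - 1 = t * (Real.tanh t + 1) - 1
    rw [hu]; linarith
  · -- main part
    intro t ht htval c hc
    have htanh := tanh_exp_formula t
    set A := Real.exp (2 * t) with hAdef
    have hApos : 0 < A := Real.exp_pos _
    have hcon : 2 * t * A = A + 1 := by
      rw [htanh] at htval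
      field_simp at htval
      nlinarith [htval]
    have hdiv : c * t / c = t := by field_simp
    have hfct : |c * t| - (c * t) * Real.tanh ((c * t) / c) = c * t * (1 - Real.tanh t) := by
      rw [abs_of_pos (mul_pos hc ht), hdiv]; ring
    have hfctn : |(-(c * t))| - (-(c * t)) * Real.tanh ((-(c * t)) / c) =
        c * t * (1 - Real.tanh t) := by
      rw [abs_neg, neg_div, Real.tanh_neg, abs_of_pos (mul_pos hc ht), hdiv]; ring
    refine ⟨⟨⟨c * t, hfct⟩, ?_⟩, hfct, hfctn⟩
    rintro y ⟨x, rfl⟩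
    simp only
    have heven : x * Real.tanh (x / c) = |x| * Real.tanh (|x| / c) := by
      rcases abs_cases x with ⟨h1, _⟩ | ⟨h1, _⟩
      · rw [h1]
      · rw [h1, neg_div, Real.tanh_neg]; ring
    rw [heven]
    set u := |x| / c with hu
    have hu0 : 0 ≤ u := div_nonneg (abs_nonneg x) hc.le
    have hxu : |x| = c * u := by rw [hu]; field_simp
    rw [hxu]
    have hmain : u * (1 - Real.tanh u) ≤ t * (1 - Real.tanh t) := by
      have hBtanh := tanh_exp_formula u
      set B := Real.exp (2 * u) with hBdef
      have hBpos : 0 < B := Real.exp_pos _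
      have hkey : (2 * u) * A ≤ B + 1 := by
        have := key_ineq (2 * t) (2 * u) (by rw [← hAdef]; linarith [hcon])
        rw [← hAdef, ← hBdef] at this
        linarith
      have h1 : 1 - Real.tanh u = 2 / (B + 1) := by
        rw [hBtanh]; field_simp; norm_num
      have h2 : 1 - Real.tanh t = 2 / (A + 1) := by
        rw [htanh]; field_simp; norm_num
      rw [h1, h2, ← mul_div_assoc, ← mul_div_assoc,
        div_le_div_iff₀ (by linarith) (by linarith)]
      nlinarith [mul_le_mul_of_nonneg_left hkey ht.le]
    nlinarith [mul_le_mul_of_nonneg_left hmain hc.le]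
end

section
/- For every c > 0 and every x ∈ ℝ, x² − x²·tanh²(x/c) < c²; equivalently, |x|² − (x·tanh(x/c))² < (√(x² + c²))² − |x|², so that in this squared sense the approximation of |x| by x·tanh(x/c) is more accurate than the approximation by the multiquadric √(x² + c²). -/
lemma abs_lt_cosh_aux (t : ℝ) : |t| < Real.cosh t := by
  have h1 : Real.cosh t ^ 2 - Real.sinh t ^ 2 = 1 := Real.cosh_sq_sub_sinh_sq t
  have hp := Real.cosh_pos t
  rcases abs_cases t with ⟨he, _⟩ | ⟨he, _⟩
  · rw [he]
    have : t ≤ Real.sinh t := Real.self_le_sinh_iff.2 (by linarith [abs_nonneg t, he ▸ abs_nonneg t])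
    nlinarith [this, sq_nonneg (Real.sinh t + Real.cosh t)]
  · rw [he]
    have : -t ≤ Real.sinh (-t) := Real.self_le_sinh_iff.2 (by linarith [he ▸ abs_nonneg t])
    rw [Real.sinh_neg] at this
    nlinarith

/-- For every `c > 0` and every `x : ℝ`, `x² − x²·tanh²(x/c) < c²`; equivalently,
`|x|² − (x·tanh(x/c))² < (√(x² + c²))² − |x|²`. -/
theorem rth_more_accurate_than_mq (c : ℝ) (hc : 0 < c) (x : ℝ) :
    x ^ 2 - x ^ 2 * Real.tanh (x / c) ^ 2 < c ^ 2 ∧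
    |x| ^ 2 - (x * Real.tanh (x / c)) ^ 2 <
      Real.sqrt (x ^ 2 + c ^ 2) ^ 2 - |x| ^ 2 := by
  set t := x / c with ht
  have hx : x = c * t := by rw [ht]; field_simp
  have h1 : Real.cosh t ^ 2 - Real.sinh t ^ 2 = 1 := Real.cosh_sq_sub_sinh_sq t
  have hp := Real.cosh_pos t
  have habs := abs_lt_cosh_aux t
  have htanh : Real.tanh t = Real.sinh t / Real.cosh t := Real.tanh_eq_sinh_div_cosh t
  have hsq : Real.sqrt (x ^ 2 + c ^ 2) ^ 2 = x ^ 2 + c ^ 2 :=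
    Real.sq_sqrt (by positivity)
  have key : x ^ 2 - x ^ 2 * Real.tanh t ^ 2 < c ^ 2 := by
    rw [htanh, hx]
    have habs2 : t ^ 2 < Real.cosh t ^ 2 := by
      nlinarith [abs_nonneg t, sq_abs t]
    rw [div_pow]
    have hc2 : Real.cosh t ^ 2 ≠ 0 := by positivity
    field_simp
    nlinarith [mul_lt_mul_of_pos_left habs2 (pow_pos hc 2), sq_nonneg (c*t), h1, mul_pos hp hp]
  refine ⟨key, ?_⟩
  rw [hsq, sq_abs, mul_pow]
  linarith
end

section
/- For every x ∈ ℝ, the ratio (x·tanh(x/c) − |x|) / (√(x² + c²) − |x|) tends to 0 as c → 0⁺; that is, x·tanh(x/c) − |x| = o(√(x² + c²) − |x|) as c → 0⁺, so x·tanh(x/c) converges to |x| faster than √(x² + c²) does. -/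
open Real Filter Set

lemma one_sub_tanh_le (s : ℝ) : 1 - Real.tanh s ≤ 2 * Real.exp (-(2*s)) := by
  have he : 0 < Real.exp s := Real.exp_pos s
  have he' : 0 < Real.exp (-s) := Real.exp_pos _
  have h1 : Real.exp s * Real.exp (-s) = 1 := by rw [← Real.exp_add]; simp
  have h2 : Real.exp (-(2*s)) = Real.exp (-s) * Real.exp (-s) := by
    rw [← Real.exp_add]; ring_nf
  rw [Real.tanh_eq_sinh_div_cosh, Real.sinh_eq, Real.cosh_eq]
  have key : 1 - (Real.exp s - Real.exp (-s)) / 2 / ((Real.exp s + Real.exp (-s)) / 2)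
      = 2 * Real.exp (-s) / (Real.exp s + Real.exp (-s)) := by
    field_simp; ring
  rw [key, div_le_iff₀ (by positivity)]
  nlinarith [h1, h2, he, he']

lemma tanh_le_one (s : ℝ) : Real.tanh s ≤ 1 := by
  have he' : 0 < Real.exp (-s) := Real.exp_pos _
  rw [Real.tanh_eq_sinh_div_cosh, div_le_one (Real.cosh_pos s), Real.sinh_eq, Real.cosh_eq]
  nlinarith

lemma x_mul_tanh (x c : ℝ) : x * Real.tanh (x / c) = |x| * Real.tanh (|x| / c) := by
  rcases abs_cases x with ⟨h, _⟩ | ⟨h, _⟩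
  · rw [h]
  · rw [h, neg_div, Real.tanh_neg]; ring

/-- For every `x : ℝ`, `(x·tanh(x/c) − |x|) / (√(x² + c²) − |x|) → 0` as `c → 0⁺`,
i.e. `x·tanh(x/c) − |x| = o(√(x² + c²) − |x|)` as `c → 0⁺`. -/
theorem rth_converges_faster_than_mq (x : ℝ) :
    Filter.Tendsto
      (fun c : ℝ => (x * Real.tanh (x / c) - |x|) / (Real.sqrt (x ^ 2 + c ^ 2) - |x|))
      (nhdsWithin 0 (Set.Ioi 0)) (nhds 0) := by
  rcases eq_or_ne x 0 with rfl | hx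
  · simpa using tendsto_const_nhds (α := ℝ) (f := nhdsWithin 0 (Set.Ioi 0)) (a := (0:ℝ))
  have ha : 0 < |x| := abs_pos.mpr hx
  -- squeeze with g c = (3/2) * (2|x|/c)^2 * exp(-(2|x|/c))
  apply squeeze_zero_norm' (a := fun c => (3/2) * ((2*|x|/c)^2 * Real.exp (-(2*|x|/c))))
  · filter_upwards [Ioo_mem_nhdsGT_of_mem (by constructor <;> simp [ha] : (0:ℝ) ∈ Set.Ico 0 |x|)]
      with c hc
    obtain ⟨hc0, hcx⟩ := hc
    set a := |x| with hadef
    have hsq : Real.sqrt (x ^ 2 + c ^ 2) ^ 2 = x ^ 2 + c ^ 2 :=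
      Real.sq_sqrt (by positivity)
    have hsqnn : 0 ≤ Real.sqrt (x ^ 2 + c ^ 2) := Real.sqrt_nonneg _
    have haxs : a ^ 2 = x ^ 2 := sq_abs x
    -- denominator positive
    have hD : 0 < Real.sqrt (x ^ 2 + c ^ 2) - a := by
      have : a < Real.sqrt (x ^ 2 + c ^ 2) := by
        nlinarith [hsq, hsqnn]
      linarith
    -- sqrt upper bound: sqrt(x²+c²) ≤ 2a  (since c ≤ a, x²+c² ≤ 2a² ≤ (2a)²)
    have hub : Real.sqrt (x ^ 2 + c ^ 2) ≤ 2 * a := by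
      nlinarith [hsq, hsqnn, hcx.le, hc0.le, ha]
    -- denominator lower bound: D ≥ c²/(3a)
    have hDlb : c ^ 2 / (3 * a) ≤ Real.sqrt (x ^ 2 + c ^ 2) - a := by
      rw [div_le_iff₀ (by positivity)]
      nlinarith [hsq, hub, hsqnn]
    -- numerator bound
    have htanh := one_sub_tanh_le (a / c)
    have htanh1 := tanh_le_one (a / c)
    have hN : |x * Real.tanh (x / c) - a| ≤ 2 * a * Real.exp (-(2 * a / c)) := by
      rw [x_mul_tanh, abs_sub_comm, abs_of_nonneg (by nlinarith)]
      have : -(2 * a / c) = -(2 * (a / c)) := by ring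
      rw [this]
      nlinarith [htanh, ha]
    rw [Real.norm_eq_abs, abs_div, abs_of_pos hD]
    rw [div_le_iff₀ hD]
    have hE : 0 ≤ Real.exp (-(2 * a / c)) := (Real.exp_pos _).le
    have key : (3/2) * ((2*a/c)^2 * Real.exp (-(2*a/c))) * (c ^ 2 / (3 * a))
        = 2 * a * Real.exp (-(2 * a / c)) := by
      field_simp
    calc |x * Real.tanh (x / c) - a| ≤ 2 * a * Real.exp (-(2 * a / c)) := hN
      _ = (3/2) * ((2*a/c)^2 * Real.exp (-(2*a/c))) * (c ^ 2 / (3 * a)) := key.symm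
      _ ≤ (3/2) * ((2*a/c)^2 * Real.exp (-(2*a/c))) * (Real.sqrt (x ^ 2 + c ^ 2) - a) := by
          apply mul_le_mul_of_nonneg_left hDlb
          positivity
  · have h1 : Filter.Tendsto (fun c : ℝ => 2*|x|/c) (nhdsWithin 0 (Set.Ioi 0)) Filter.atTop := by
      have := tendsto_inv_nhdsGT_zero (𝕜 := ℝ)
      have := this.const_mul_atTop (r := 2*|x|) (by positivity)
      simpa [div_eq_mul_inv, mul_comm] using this
    have h2 := (Real.tendsto_pow_mul_exp_neg_atTop_nhds_zero 2).comp h1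
    have h3 := h2.const_mul (3/2 : ℝ)
    simpa [Function.comp] using h3
end

section
/- With the extended functions φ_{−1}, φ₀, φ_n, φ_{n+1} and the functions ψ_j for 0 ≤ j ≤ n as in the context, for all real numbers a', b' and every x ∈ [x₀, x_n], Σ_{j=0}^n (a'·x_j + b')·ψ_j(x) = a'·x + b'; in particular Σ_{j=0}^n ψ_j(x) = 1 for every x ∈ [x₀, x_n]. Hence the RTH quasi-interpolation operator reproduces linear polynomials on [x₀, x_n]. -/
/-- The extended basis functions: `φ_j(t) = (t − x_j)·tanh((t − x_j)/c)` for
`1 ≤ j ≤ n − 1`, and `φ_j(t) = |t − x_j|` for `j ∈ {−1, 0, n, n+1}`. -/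
noncomputable def rthPhiExt (c : ℝ) (n : ℤ) (X : ℤ → ℝ) (j : ℤ) (t : ℝ) : ℝ :=
  if 1 ≤ j ∧ j ≤ n - 1 then (t - X j) * Real.tanh ((t - X j) / c) else |t - X j|

/-- `ψ_j(t) = (φ_{j+1}(t) − φ_j(t))/(2(x_{j+1} − x_j)) − (φ_j(t) − φ_{j−1}(t))/(2(x_j − x_{j−1}))`. -/
noncomputable def rthPsiExt (c : ℝ) (n : ℤ) (X : ℤ → ℝ) (j : ℤ) (t : ℝ) : ℝ :=
  (rthPhiExt c n X (j + 1) t - rthPhiExt c n X j t) / (2 * (X (j + 1) - X j)) -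
    (rthPhiExt c n X j t - rthPhiExt c n X (j - 1) t) / (2 * (X j - X (j - 1)))

lemma rth_key_s9 (c : ℝ) (n : ℕ) (hn : 4 ≤ n) (X : ℤ → ℝ)
    (hX : StrictMonoOn X (Set.Icc (-1 : ℤ) (n + 1)))
    (a' b' t : ℝ) (ht : t ∈ Set.Icc (X 0) (X n)) :
    (∑ j ∈ Finset.range (n + 1), (a' * X j + b') * rthPsiExt c n X j t) = a' * t + b' := by
  obtain ⟨ht0, htn⟩ := ht
  have hnZ : (4 : ℤ) ≤ (n : ℤ) := by exact_mod_cast hn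
  have hlt : ∀ k : ℤ, -1 ≤ k → k + 1 ≤ (n : ℤ) + 1 → X k < X (k + 1) := fun k hk1 hk2 =>
    hX ⟨hk1, by linarith⟩ ⟨by linarith, hk2⟩ (by linarith)
  set φ : ℤ → ℝ := fun k => rthPhiExt c n X k t with hφdef
  set B : ℕ → ℝ := fun k => (φ k - φ ((k : ℤ) - 1)) / (2 * (X k - X ((k : ℤ) - 1))) with hBdef
  set f : ℕ → ℝ := fun j => a' * X j + b' with hfdef
  set g : ℕ → ℝ := fun k => (a' / 2) * φ (k : ℤ) with hgdef
  have hψ : ∀ j : ℕ, rthPsiExt c n X j t = B (j + 1) - B j := by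
    intro j
    simp only [rthPsiExt, hBdef, hφdef, Nat.cast_add, Nat.cast_one, add_sub_cancel_right]
  have hφ0 : φ 0 = t - X 0 := by
    simp only [hφdef, rthPhiExt]
    rw [if_neg (by omega)]
    exact abs_of_nonneg (by linarith)
  have hφn : φ n = X n - t := by
    simp only [hφdef, rthPhiExt]
    rw [if_neg (by omega)]
    rw [abs_of_nonpos (by linarith)]; ring
  have hlt0 : X (-1) < X 0 := by have := hlt (-1) le_rfl (by linarith); simpa using this
  have hltn : X ((n : ℤ)) < X ((n : ℤ) + 1) := hlt n (by linarith) le_rfl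
  have hφm1 : φ (-1) = t - X (-1) := by
    simp only [hφdef, rthPhiExt]
    rw [if_neg (by omega)]
    exact abs_of_nonneg (by linarith)
  have hφn1 : φ ((n : ℤ) + 1) = X ((n : ℤ) + 1) - t := by
    simp only [hφdef, rthPhiExt]
    rw [if_neg (by omega)]
    rw [abs_of_nonpos (by linarith)]; ring
  have hdn : X ((n : ℤ) + 1) - X (n : ℤ) ≠ 0 := by linarith
  have hd0 : X (0 : ℤ) - X (-1) ≠ 0 := by linarith
  have hBtop : B (n + 1) = 1 / 2 := by
    simp only [hBdef, Nat.cast_add, Nat.cast_one, add_sub_cancel_right, hφn, hφn1]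
    field_simp
    ring
  have hB0 : B 0 = -(1 / 2) := by
    simp only [hBdef, Nat.cast_zero, zero_sub]
    norm_num [hφ0, hφm1]
    field_simp
    ring
  -- rewrite the sum
  have step1 : (∑ j ∈ Finset.range (n + 1), f j * rthPsiExt c n X j t)
      = (∑ j ∈ Finset.range (n + 1), (f (j + 1) * B (j + 1) - f j * B j))
        - (∑ j ∈ Finset.range (n + 1), (g (j + 1) - g j)) := by
    rw [← Finset.sum_sub_distrib]
    refine Finset.sum_congr rfl ?_
    intro j hj
    rw [hψ j]
    have hjn : (j : ℤ) + 1 ≤ (n : ℤ) + 1 := by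
      have := Finset.mem_range.mp hj; omega
    have hdj : X ((j : ℤ) + 1) - X (j : ℤ) ≠ 0 := by
      have := hlt j (by omega) hjn; linarith
    have hBj : (f (j + 1) - f j) * B (j + 1)
        = g (j + 1) - g j := by
      simp only [hfdef, hBdef, hgdef, Nat.cast_add, Nat.cast_one, add_sub_cancel_right]
      field_simp
      ring
    linarith [hBj]
  calc (∑ j ∈ Finset.range (n + 1), (a' * X j + b') * rthPsiExt c n X j t)
      = (∑ j ∈ Finset.range (n + 1), f j * rthPsiExt c n X j t) := rfl
    _
      = (f (n + 1) * B (n + 1) - f 0 * B 0)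
        - (g (n + 1) - g 0) := by
        rw [step1, Finset.sum_range_sub (fun k => f k * B k),
          Finset.sum_range_sub g]
    _ = a' * t + b' := by
        simp only [hBtop, hB0, hφn1, hfdef, hgdef, Nat.cast_add, Nat.cast_one,
          Nat.cast_zero, hφ0]
        ring

/-- With the extended functions `φ_{−1}, φ₀, φ_n, φ_{n+1}` and the `ψ_j` for `0 ≤ j ≤ n`,
for all reals `a', b'` and every `x ∈ [x₀, x_n]`,
`Σ_{j=0}^n (a'·x_j + b')·ψ_j(x) = a'·x + b'`; in particular `Σ_{j=0}^n ψ_j(x) = 1`.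
Hence the RTH quasi-interpolation operator reproduces linear polynomials. -/
theorem rth_quasi_interpolation_reproduces_linear
    (c : ℝ) (hc : 0 < c) (n : ℕ) (hn : 4 ≤ n) (X : ℤ → ℝ)
    (hX : StrictMonoOn X (Set.Icc (-1 : ℤ) (n + 1)))
    (a' b' : ℝ) (t : ℝ) (ht : t ∈ Set.Icc (X 0) (X n)) :
    (∑ j ∈ Finset.range (n + 1), (a' * X j + b') * rthPsiExt c n X j t) =
      a' * t + b' ∧
    (∑ j ∈ Finset.range (n + 1), rthPsiExt c n X j t) = 1 := by
  refine ⟨rth_key_s9 c n hn X hX a' b' t ht, ?_⟩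
  have := rth_key_s9 c n hn X hX 0 1 t ht
  simpa using this
end
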